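/- arXiv:1912.04445 — 4 statements merged into one kernel-verified Lean document; each statement's English description precedes it below -/
import Mathlib

section
/- For all natural numbers n and m, the cylindrical board (6+2n)′×(7+2m) admits a fault-free domino tiling. -/
/-! Every row is tiled by horizontal dominoes except for a window of three consecutive cells,
and the windows of consecutive rows are joined by vertical dominoes. The window of row
`i + 1` is shifted against that of row `i` by `2` columns when `i` is even and by `1` column
when `i` is odd. With `q` the column relative to the window, the cell `q` points to its
partner as follows:

    q            0  1  2
    row 0        →  ←  ↓
    even row     ↑  ↑  ↓
    odd row      ↑  ↓  ↓
    last row     ↑  →  ←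

while the cells `q = 3, …, b - 1` are paired as `(3, 4), (5, 6), …`, which needs `b` odd;
`a` even makes the last row an odd row. The window of every row but the last crosses the
fault line below it. The windows wind around the cylinder, so every vertical fault line is
crossed by a horizontal domino in one of the rows `0, 2, 4`, whose windows start at columns
`0, 3, 6`. -/

/-- Adjacency on the cylindrical board `a′ × b` (height `a`, circumference `b`):
cells `(i,j)` and `(i+1,j)` (vertical neighbors) or `(i,j)` and `(i,j+1)` with
addition in `ZMod b` (horizontal neighbors, wrapping around). -/
def cylAdj (a b : ℕ) (c d : Fin a × ZMod b) : Prop :=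
  (c.2 = d.2 ∧ ((c.1 : ℕ) + 1 = (d.1 : ℕ) ∨ (d.1 : ℕ) + 1 = (c.1 : ℕ))) ∨
  (c.1 = d.1 ∧ (d.2 = c.2 + 1 ∨ c.2 = d.2 + 1))

/-- A tiling of the cylindrical board: a set of dominoes (unordered pairs of
adjacent cells) such that every cell belongs to exactly one domino. -/
def cylIsTiling (a b : ℕ) (T : Set (Sym2 (Fin a × ZMod b))) : Prop :=
  (∀ p ∈ T, ∃ c d, cylAdj a b c d ∧ p = s(c, d)) ∧
  (∀ x : Fin a × ZMod b, ∃! p, p ∈ T ∧ x ∈ p)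

/-- A tiling of the cylindrical board is fault-free if every horizontal fault-line
(between rows `i` and `i+1`, for `i + 1 < a`) and every vertical fault-line
(between columns `j` and `j+1`, for `j : ZMod b`) is crossed by some domino. -/
def cylFaultFree (a b : ℕ) (T : Set (Sym2 (Fin a × ZMod b))) : Prop :=
  (∀ i : ℕ, i + 1 < a → ∃ c d : Fin a × ZMod b,
      s(c, d) ∈ T ∧ c.2 = d.2 ∧ (c.1 : ℕ) = i ∧ (d.1 : ℕ) = i + 1) ∧
  (∀ j : ZMod b, ∃ i : Fin a, s((i, j), (i, j + 1)) ∈ T)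

/-- The cylindrical board `a′ × b` admits a fault-free domino tiling. -/
def cylFaultFreeTileable (a b : ℕ) : Prop :=
  ∃ T : Set (Sym2 (Fin a × ZMod b)), cylIsTiling a b T ∧ cylFaultFree a b T

theorem ZMod.val_add_natCast_of_lt {n : ℕ} {x : ZMod n} {c : ℕ} (h : x.val + c < n) :
    (x + c).val = x.val + c := by
  have hc : (c : ZMod n).val = c := ZMod.val_natCast_of_lt (by omega)
  rw [ZMod.val_add_of_lt (by omega), hc]

theorem ZMod.val_sub_natCast_of_le {n : ℕ} [NeZero n] {x : ZMod n} {c : ℕ} (h : c ≤ x.val) :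
    (x - c).val = x.val - c := by
  have hc : (c : ZMod n).val = c := ZMod.val_natCast_of_lt (h.trans_lt x.val_lt)
  rw [ZMod.val_sub (by rwa [hc]), hc]

theorem ZMod.val_sub_natCast_of_lt {n : ℕ} {x : ZMod n} {c : ℕ} (h : x.val < c) (hc : c ≤ n) :
    (x - c).val = x.val + (n - c) := by
  have hx : x - c = x + ((n - c : ℕ) : ZMod n) := by
    rw [Nat.cast_sub hc, ZMod.natCast_self, zero_sub, sub_eq_add_neg]
  rw [hx, ZMod.val_add_natCast_of_lt (by omega)]

theorem cylIsTiling_range_of_involutive {a b : ℕ} {σ : Fin a × ZMod b → Fin a × ZMod b}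
    (hadj : ∀ x, cylAdj a b x (σ x)) (hσ : Function.Involutive σ) :
    cylIsTiling a b (Set.range fun x => s(x, σ x)) := by
  refine ⟨?_, fun x => ⟨s(x, σ x), ⟨⟨x, rfl⟩, Sym2.mem_mk_left _ _⟩, ?_⟩⟩
  · rintro _ ⟨x, rfl⟩
    exact ⟨x, σ x, hadj x, rfl⟩
  · rintro _ ⟨⟨y, rfl⟩, hx⟩
    rcases Sym2.mem_iff.mp hx with rfl | rfl
    · rfl
    · rw [hσ y, Sym2.eq_swap]

namespace CylBoard

inductive Dir
  | left
  | right
  | up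
  | down

variable {a b : ℕ}

/-- Moves `up` from row `0` and `down` from row `a - 1` are clamped; domino fields never
make them. -/
def Dir.move : Dir → Fin a × ZMod b → Fin a × ZMod b
  | .left, (i, j) => (i, j - 1)
  | .right, (i, j) => (i, j + 1)
  | .up, (i, j) => (⟨i - 1, by omega⟩, j)
  | .down, (i, j) => (⟨min (i + 1) (a - 1), by omega⟩, j)

/-- `D x` points from `x` to the other cell of its domino, which must point back. -/
structure IsDominoField (D : Fin a × ZMod b → Dir) : Prop where
  right_left : ∀ x, D x = .right → D (Dir.right.move x) = .left
  left_right : ∀ x, D x = .left → D (Dir.left.move x) = .right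
  down_up : ∀ x, D x = .down → (x.1 : ℕ) + 1 < a ∧ D (Dir.down.move x) = .up
  up_down : ∀ x, D x = .up → 0 < (x.1 : ℕ) ∧ D (Dir.up.move x) = .down

def partner (D : Fin a × ZMod b → Dir) (x : Fin a × ZMod b) : Fin a × ZMod b :=
  (D x).move x

namespace IsDominoField

variable {D : Fin a × ZMod b → Dir}

theorem cylAdj_partner (hD : IsDominoField D) (x : Fin a × ZMod b) :
    cylAdj a b x (partner D x) := by
  obtain ⟨i, j⟩ := x
  unfold partner
  cases h : D (i, j) with
  | left => exact Or.inr ⟨rfl, Or.inr (sub_add_cancel j 1).symm⟩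
  | right => exact Or.inr ⟨rfl, Or.inl rfl⟩
  | up =>
    have hi : 0 < (i : ℕ) := (hD.up_down _ h).1
    exact Or.inl ⟨rfl, Or.inr (by simp only [Dir.move]; omega)⟩
  | down =>
    have hi : (i : ℕ) + 1 < a := (hD.down_up _ h).1
    exact Or.inl ⟨rfl, Or.inl (by simp only [Dir.move]; omega)⟩

theorem partner_involutive (hD : IsDominoField D) : Function.Involutive (partner D) := by
  rintro ⟨i, j⟩
  unfold partner
  cases h : D (i, j) with
  | left => rw [hD.left_right _ h]; simp [Dir.move]
  | right => rw [hD.right_left _ h]; simp [Dir.move]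
  | up =>
    obtain ⟨hi, h'⟩ := hD.up_down _ h
    dsimp only at hi
    rw [h']
    simp only [Dir.move, Prod.mk.injEq, Fin.ext_iff, and_true]
    omega
  | down =>
    obtain ⟨hi, h'⟩ := hD.down_up _ h
    dsimp only at hi
    rw [h']
    simp only [Dir.move, Prod.mk.injEq, Fin.ext_iff, and_true]
    omega

theorem cylIsTiling (hD : IsDominoField D) :
    cylIsTiling a b (Set.range fun x => s(x, partner D x)) :=
  cylIsTiling_range_of_involutive hD.cylAdj_partner hD.partner_involutive

end IsDominoField

theorem cylFaultFree_range_partner {D : Fin a × ZMod b → Dir}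
    (hdown : ∀ i : ℕ, i + 1 < a → ∃ x : Fin a × ZMod b, (x.1 : ℕ) = i ∧ D x = .down)
    (hright : ∀ j : ZMod b, ∃ i : Fin a, D (i, j) = .right) :
    cylFaultFree a b (Set.range fun x => s(x, partner D x)) := by
  refine ⟨fun i hi => ?_, fun j => ?_⟩
  · obtain ⟨x, rfl, hx⟩ := hdown i hi
    refine ⟨x, partner D x, ⟨x, rfl⟩, ?_⟩
    simp only [partner, hx, Dir.move, true_and]
    omega
  · obtain ⟨i, hi⟩ := hright j
    exact ⟨i, (i, j), by simp [partner, hi, Dir.move]⟩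

def windowShift (i : ℕ) : ℕ := if i % 2 = 0 then 2 else 1

def windowOffset : ℕ → ℕ
  | 0 => 0
  | i + 1 => windowOffset i + windowShift i

def rowDir (a i q : ℕ) : Dir :=
  if q = 0 then (if i = 0 then .right else .up)
  else if q = 1 then
    (if i = 0 then .left else if i % 2 = 0 then .up else if i + 1 = a then .right else .down)
  else if q = 2 then (if i % 2 = 0 then .down else if i + 1 = a then .left else .down)
  else if q % 2 = 1 then .right else .left

theorem rowDir_eq_right {i q : ℕ} (hb : Odd b) (hb3 : 3 ≤ b) (hq : q < b)
    (h : rowDir a i q = .right) : q + 1 < b ∧ rowDir a i (q + 1) = .left := by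
  obtain ⟨k, rfl⟩ := hb
  simp only [rowDir] at h ⊢
  split_ifs at h ⊢ <;>
    first | exact ⟨by omega, rfl⟩ | (simp at h; done) | (exfalso; omega)

theorem rowDir_eq_left {i q : ℕ} (h : rowDir a i q = .left) :
    0 < q ∧ rowDir a i (q - 1) = .right := by
  simp only [rowDir] at h ⊢
  split_ifs at h ⊢ <;>
    first | exact ⟨by omega, rfl⟩ | (simp at h; done) | (exfalso; omega)

theorem rowDir_eq_down {i q : ℕ} (ha : Even a) (hi : i < a) (h : rowDir a i q = .down) :
    i + 1 < a ∧ windowShift i ≤ q ∧ rowDir a (i + 1) (q - windowShift i) = .up := by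
  obtain ⟨k, rfl⟩ := ha
  simp only [rowDir, windowShift] at h ⊢
  split_ifs at h ⊢ <;>
    first | exact ⟨by omega, by omega, rfl⟩ | (simp at h; done) | (exfalso; omega)

theorem rowDir_eq_up {i q : ℕ} (hi : i < a) (h : rowDir a i q = .up) :
    0 < i ∧ q + windowShift (i - 1) ≤ 2 ∧
      rowDir a (i - 1) (q + windowShift (i - 1)) = .down := by
  simp only [rowDir, windowShift] at h ⊢
  split_ifs at h ⊢ <;>
    first | exact ⟨by omega, by omega, rfl⟩ | (simp at h; done) | (exfalso; omega)

theorem rowDir_windowShift {i : ℕ} (hi : i + 1 < a) : rowDir a i (windowShift i) = .down := by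
  simp only [rowDir, windowShift]
  split_ifs <;> first | rfl | omega

theorem sub_windowOffset_succ (j : ZMod b) (i : ℕ) :
    j - (windowOffset (i + 1) : ZMod b) =
      j - (windowOffset i : ZMod b) - (windowShift i : ZMod b) := by
  rw [windowOffset, Nat.cast_add, sub_add_eq_sub_sub]

def staircase (a b : ℕ) (x : Fin a × ZMod b) : Dir :=
  rowDir a x.1 (x.2 - (windowOffset x.1 : ZMod b)).val

theorem isDominoField_staircase (ha : Even a) (hb : Odd b) (hb3 : 3 ≤ b) :
    IsDominoField (staircase a b) := by
  have : NeZero b := ⟨hb.pos.ne'⟩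
  constructor
  · rintro ⟨i, j⟩ h
    obtain ⟨hlt, h'⟩ := rowDir_eq_right hb hb3 (ZMod.val_lt _) h
    simp only [staircase, Dir.move]
    rwa [add_sub_right_comm, ← Nat.cast_one, ZMod.val_add_natCast_of_lt hlt]
  · rintro ⟨i, j⟩ h
    obtain ⟨hpos, h'⟩ := rowDir_eq_left h
    simp only [staircase, Dir.move]
    rwa [sub_right_comm, ← Nat.cast_one, ZMod.val_sub_natCast_of_le hpos]
  · rintro ⟨i, j⟩ h
    obtain ⟨hlt, hle, h'⟩ := rowDir_eq_down ha i.isLt h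
    refine ⟨hlt, ?_⟩
    have hmin : min ((i : ℕ) + 1) (a - 1) = i + 1 := by omega
    simp only [staircase, Dir.move, hmin]
    rwa [sub_windowOffset_succ, ZMod.val_sub_natCast_of_le hle]
  · rintro ⟨i, j⟩ h
    obtain ⟨hpos, hle, h'⟩ := rowDir_eq_up i.isLt h
    refine ⟨hpos, ?_⟩
    obtain ⟨k, hk⟩ : ∃ k, (i : ℕ) = k + 1 := ⟨i - 1, by omega⟩
    simp only [staircase, Dir.move] at hle h' ⊢
    simp only [hk, Nat.add_sub_cancel] at hle h' ⊢
    have hj : j - (windowOffset k : ZMod b) =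
        j - (windowOffset (k + 1) : ZMod b) + (windowShift k : ZMod b) := by
      rw [sub_windowOffset_succ, sub_add_cancel]
    rwa [hj, ZMod.val_add_natCast_of_lt (by omega)]

theorem exists_staircase_down (hb3 : 3 ≤ b) {i : ℕ} (hi : i + 1 < a) :
    ∃ x : Fin a × ZMod b, (x.1 : ℕ) = i ∧ staircase a b x = .down := by
  refine ⟨(⟨i, by omega⟩, ((windowOffset i + windowShift i : ℕ) : ZMod b)), rfl, ?_⟩
  have hs : windowShift i < b := by unfold windowShift; split_ifs <;> omega
  simp only [staircase]
  rw [Nat.cast_add, add_sub_cancel_left, ZMod.val_natCast_of_lt hs]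
  exact rowDir_windowShift hi

theorem exists_staircase_right (ha5 : 5 ≤ a) (hb : Odd b) (hb7 : 7 ≤ b) (j : ZMod b) :
    ∃ i : Fin a, staircase a b (i, j) = .right := by
  have : NeZero b := ⟨hb.pos.ne'⟩
  obtain ⟨k, rfl⟩ := hb
  have hj := j.val_lt
  rcases (by omega : (j.val = 0 ∨ (j.val % 2 = 1 ∧ 3 ≤ j.val)) ∨ j.val = 1 ∨
      (j.val % 2 = 0 ∧ 6 ≤ j.val) ∨ j.val = 2 ∨ j.val = 4) with h | h | h | h
  · refine ⟨⟨0, by omega⟩, ?_⟩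
    simp only [staircase, windowOffset, Nat.cast_zero, sub_zero, rowDir]
    split_ifs <;> first | rfl | omega
  · refine ⟨⟨2, by omega⟩, ?_⟩
    simp only [staircase, show windowOffset 2 = 3 from rfl]
    rw [ZMod.val_sub_natCast_of_lt (by omega) (by omega), rowDir]
    split_ifs <;> first | rfl | omega
  · refine ⟨⟨2, by omega⟩, ?_⟩
    simp only [staircase, show windowOffset 2 = 3 from rfl]
    rw [ZMod.val_sub_natCast_of_le (by omega), rowDir]
    split_ifs <;> first | rfl | omega
  · refine ⟨⟨4, by omega⟩, ?_⟩
    simp only [staircase, show windowOffset 4 = 6 from rfl]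
    rw [ZMod.val_sub_natCast_of_lt (by omega) (by omega), rowDir]
    split_ifs <;> first | rfl | omega

theorem cylFaultFreeTileable_of_even_of_odd (ha : Even a) (ha5 : 5 ≤ a) (hb : Odd b)
    (hb7 : 7 ≤ b) : cylFaultFreeTileable a b :=
  ⟨_, (isDominoField_staircase ha hb (by omega)).cylIsTiling,
    cylFaultFree_range_partner (fun _ hi => exists_staircase_down (by omega) hi)
      (exists_staircase_right ha5 hb hb7)⟩

end CylBoard

/-- For all natural numbers `n` and `m`, the cylindrical board
`(6 + 2 * n)′ × (7 + 2 * m)` admits a fault-free domino tiling. -/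
theorem cyl_faultFree_6'7 :
    ∀ n m : ℕ, cylFaultFreeTileable (6 + 2 * n) (7 + 2 * m) := fun n m =>
  CylBoard.cylFaultFreeTileable_of_even_of_odd ⟨n + 3, by ring⟩ (by omega) ⟨m + 3, by ring⟩
    (by omega)
end

section
/- For every natural number n, the cylindrical board (4+2n)′×3 does not admit a fault-free domino tiling. -/
/-!
On a board of circumference 3 a row holds at most one horizontal domino. In a row that is not
the top or bottom one, the fault-lines just below and just above are each crossed by a vertical
domino, and these cover two distinct cells of the row; the one cell left cannot carry a horizontal
domino. So horizontal dominoes occur only in the two boundary rows, at most one in each, while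
each of the three vertical fault-lines needs its own horizontal domino.
-/

lemma cylAdj.symm {a b : ℕ} {c d : Fin a × ZMod b} (h : cylAdj a b c d) : cylAdj a b d c := by
  unfold cylAdj at *
  tauto

lemma cylAdj.snd_eq_add_one_or_of_fst_eq {a b : ℕ} {c d : Fin a × ZMod b} (h : cylAdj a b c d)
    (hrow : c.1 = d.1) : d.2 = c.2 + 1 ∨ c.2 = d.2 + 1 := by
  rcases h with ⟨-, hv⟩ | ⟨-, hh⟩
  · rw [hrow] at hv
    omega
  · exact hh

lemma cylIsTiling.exists_partner {a b : ℕ} {T : Set (Sym2 (Fin a × ZMod b))}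
    (hT : cylIsTiling a b T) :
    ∃ f : Fin a × ZMod b → Fin a × ZMod b,
      (∀ x, cylAdj a b x (f x)) ∧ ∀ x y, s(x, y) ∈ T ↔ f x = y := by
  have partner : ∀ x, ∃ y, s(x, y) ∈ T ∧ cylAdj a b x y := by
    intro x
    obtain ⟨p, ⟨hpT, hxp⟩, -⟩ := hT.2 x
    obtain ⟨c, d, hcd, rfl⟩ := hT.1 p hpT
    rcases Sym2.mem_iff.mp hxp with rfl | rfl
    · exact ⟨d, hpT, hcd⟩
    · exact ⟨c, by rwa [Sym2.eq_swap], hcd.symm⟩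
  choose f hfT hfadj using partner
  refine ⟨f, hfadj, fun x y => ⟨fun hxy => ?_, fun hxy => hxy ▸ hfT x⟩⟩
  obtain ⟨p, -, hunique⟩ := hT.2 x
  have h : s(x, f x) = s(x, y) :=
    (hunique _ ⟨hfT x, Sym2.mem_mk_left _ _⟩).trans (hunique _ ⟨hxy, Sym2.mem_mk_left _ _⟩).symm
  exact Sym2.congr_right.mp h

section Partner

variable {a b : ℕ} {T : Set (Sym2 (Fin a × ZMod b))} {f : Fin a × ZMod b → Fin a × ZMod b}

lemma partner_eq_comm (hf : ∀ x y, s(x, y) ∈ T ↔ f x = y) {x y : Fin a × ZMod b} :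
    f x = y ↔ f y = x := by
  rw [← hf, ← hf, Sym2.eq_swap]

lemma partner_partner (hf : ∀ x y, s(x, y) ∈ T ↔ f x = y) (x : Fin a × ZMod b) : f (f x) = x :=
  (partner_eq_comm hf).mp rfl

end Partner

lemma ZMod.three_eq_of_ne_of_ne {j j' k l : ZMod 3} (hj : j' = j + 1 ∨ j = j' + 1)
    (hk : k ≠ j ∧ k ≠ j') (hl : l ≠ j ∧ l ≠ j') : k = l := by
  revert j j' k l
  decide

section CircumferenceThree

variable {a : ℕ} {T : Set (Sym2 (Fin a × ZMod 3))} {f : Fin a × ZMod 3 → Fin a × ZMod 3}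

lemma row_eq_zero_or_last_of_horizontal (hadj : ∀ x, cylAdj a 3 x (f x))
    (hf : ∀ x y, s(x, y) ∈ T ↔ f x = y)
    (hfault : ∀ i : ℕ, i + 1 < a → ∃ c d : Fin a × ZMod 3,
      s(c, d) ∈ T ∧ c.2 = d.2 ∧ (c.1 : ℕ) = i ∧ (d.1 : ℕ) = i + 1)
    {x : Fin a × ZMod 3} (hx : (f x).1 = x.1) : (x.1 : ℕ) = 0 ∨ (x.1 : ℕ) + 1 = a := by
  obtain ⟨i, j⟩ := x
  dsimp only at hx ⊢
  by_contra! hinterior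
  obtain ⟨c, d, hcd, -, hc, hd⟩ := hfault (i - 1) (by omega)
  obtain ⟨c', d', hcd', -, hc', hd'⟩ := hfault i (by omega)
  rw [hf] at hcd hcd'
  set g : ZMod 3 → ℕ := fun col => (f (i, col)).1
  have hfx : f (i, j) = (i, (f (i, j)).2) := Prod.ext hx rfl
  have hgj : g j = i := congrArg Fin.val hx
  have hgj' : g (f (i, j)).2 = i := by
    simp only [g, ← hfx, partner_partner hf]
  have hgd : g d.2 + 1 = i := by
    have hd_eq : d = (i, d.2) := Prod.ext (Fin.ext (show (d.1 : ℕ) = i by omega)) rfl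
    show ((f (i, d.2)).1 : ℕ) + 1 = i
    rw [← hd_eq, (partner_eq_comm hf).mp hcd]
    omega
  have hgc' : g c'.2 = i + 1 := by
    have hc'_eq : c' = (i, c'.2) := Prod.ext (Fin.ext hc') rfl
    show ((f (i, c'.2)).1 : ℕ) = i + 1
    rw [← hc'_eq, hcd', hd']
  have hsame : d.2 = c'.2 :=
    ZMod.three_eq_of_ne_of_ne (j := j) ((hadj (i, j)).snd_eq_add_one_or_of_fst_eq hx.symm)
      ⟨ne_of_apply_ne g (by omega), ne_of_apply_ne g (by omega)⟩
      ⟨ne_of_apply_ne g (by omega), ne_of_apply_ne g (by omega)⟩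
  rw [hsame] at hgd
  omega

lemma eq_of_horizontal_mem (hf : ∀ x y, s(x, y) ∈ T ↔ f x = y) {i : Fin a} {j k : ZMod 3}
    (hj : s((i, j), (i, j + 1)) ∈ T) (hk : s((i, k), (i, k + 1)) ∈ T) : j = k := by
  wlog hkj : k = j + 1 generalizing j k
  · have adjacent_or_eq : ∀ j k : ZMod 3, j = k ∨ k = j + 1 ∨ j = k + 1 := by decide
    rcases adjacent_or_eq j k with h | h | h
    · exact h
    · exact absurd h hkj
    · exact (this hk hj h).symm
  subst hkj
  rw [hf] at hj hk
  have hback : f (i, j + 1) = (i, j) := (partner_eq_comm hf).mp hj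
  exact absurd (congrArg Prod.snd (hk.symm.trans hback))
    ((show ∀ j : ZMod 3, j + 1 + 1 ≠ j by decide) j)

end CircumferenceThree

theorem cyl_not_faultFreeTileable_three (a : ℕ) : ¬ cylFaultFreeTileable a 3 := by
  rintro ⟨T, hT, hfault, hcross⟩
  obtain ⟨f, hadj, hf⟩ := hT.exists_partner
  choose r hr using hcross
  have hboundary : ∀ j, (r j : ℕ) = 0 ∨ (r j : ℕ) + 1 = a := fun j =>
    row_eq_zero_or_last_of_horizontal hadj hf hfault (x := (r j, j))
      (by rw [(hf _ _).mp (hr j)])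
  have hinj : Function.Injective fun j => (r j : ℕ) := fun j k hjk =>
    eq_of_horizontal_mem hf (hr j) (Fin.ext hjk ▸ hr k)
  have h01 := hinj.ne (show (0 : ZMod 3) ≠ 1 by decide)
  have h02 := hinj.ne (show (0 : ZMod 3) ≠ 2 by decide)
  have h12 := hinj.ne (show (1 : ZMod 3) ≠ 2 by decide)
  have := hboundary 0
  have := hboundary 1
  have := hboundary 2
  omega

/-- For every natural number `n`, the cylindrical board `(4 + 2 * n)′ × (3)`
does not admit a fault-free domino tiling. -/
theorem cyl_not_faultFree_42n'3 :
    ∀ n : ℕ, ¬ cylFaultFreeTileable (4 + 2 * n) (3) :=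
  fun n => cyl_not_faultFreeTileable_three (4 + 2 * n)
end

section
/- For every natural number n, the cylindrical board 3′×(4+2n) does not admit a fault-free domino tiling. -/
/-!
Take a vertical domino `{(0,j),(1,j)}` crossing the lowest horizontal fault-line. The two
vertical fault-lines beside column `j` are crossed by horizontal dominoes through cells of
column `j`, which can only be the free cell `(2,j)`. Since a cell lies in exactly one domino, a
single domino `{(2,j-1),(2,j)} = {(2,j),(2,j+1)}` would cross both lines, forcing `j - 1 = j + 1`,
impossible as soon as `(2 : ZMod b) ≠ 0`.
-/

section Tiling

variable {a b : ℕ} {T : Set (Sym2 (Fin a × ZMod b))}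

theorem cylIsTiling.eq_of_mem (hT : cylIsTiling a b T) {p q : Sym2 (Fin a × ZMod b)}
    (hp : p ∈ T) (hq : q ∈ T) {x : Fin a × ZMod b} (hxp : x ∈ p) (hxq : x ∈ q) : p = q :=
  (hT.2 x).unique ⟨hp, hxp⟩ ⟨hq, hxq⟩

theorem cylIsTiling.row_ne_of_vertical_mem (hT : cylIsTiling a b T) {i i' k : Fin a}
    {j j' : ZMod b} (hv : s((i, j), (i', j)) ∈ T) (hh : s((k, j), (k, j')) ∈ T) (hj : j ≠ j') :
    k ≠ i ∧ k ≠ i' := by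
  have key : ∀ {l : Fin a}, (l, j) ∈ s((i, j), (i', j)) → k ≠ l := by
    rintro l hl rfl
    have hsnd := congrArg (Sym2.map Prod.snd) (hT.eq_of_mem hv hh hl (Sym2.mem_mk_left _ _))
    simp only [Sym2.map_mk, Sym2.eq_iff] at hsnd
    exact hj (by tauto)
  exact ⟨key (Sym2.mem_mk_left _ _), key (Sym2.mem_mk_right _ _)⟩

end Tiling

theorem not_cylFaultFreeTileable_three {b : ℕ} (hb : (2 : ZMod b) ≠ 0) :
    ¬ cylFaultFreeTileable 3 b := by
  rintro ⟨T, hT, hrow, hcol⟩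
  obtain ⟨⟨i, j⟩, ⟨i', j'⟩, hv, rfl : j = j', hi, hi'⟩ := hrow 0 (by norm_num)
  obtain rfl : i = 0 := Fin.ext hi
  obtain rfl : i' = 1 := Fin.ext hi'
  have top_row : ∀ {k : Fin 3} {j' : ZMod b}, s((k, j), (k, j')) ∈ T → j ≠ j' → k = 2 := by
    intro k j' hh hj
    have := hT.row_ne_of_vertical_mem hv hh hj
    fin_cases k <;> simp_all
  have h1 : (1 : ZMod b) ≠ 0 := fun h => hb (by rw [← one_add_one_eq_two, h, add_zero])
  obtain ⟨k, hright⟩ := hcol j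
  obtain ⟨k', hleft⟩ := hcol (j - 1)
  rw [sub_add_cancel, Sym2.eq_swap] at hleft
  obtain rfl := top_row hright fun h => h1 (by linear_combination -h)
  obtain rfl := top_row hleft fun h => h1 (by linear_combination h)
  have hsame := hT.eq_of_mem hright hleft (Sym2.mem_mk_left _ _) (Sym2.mem_mk_left _ _)
  simp only [Sym2.congr_right, Prod.mk.injEq, true_and] at hsame
  exact hb (by linear_combination hsame)

/-- For every natural number `n`, the cylindrical board `(3)′ × (4 + 2 * n)`
does not admit a fault-free domino tiling. -/
theorem cyl_not_faultFree_3'42n :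
    ∀ n : ℕ, ¬ cylFaultFreeTileable (3) (4 + 2 * n) := by
  intro n
  refine not_cylFaultFreeTileable_three fun h => ?_
  have hdvd : 4 + 2 * n ∣ 2 := (ZMod.natCast_eq_zero_iff 2 _).mp (by exact_mod_cast h)
  have := Nat.le_of_dvd two_pos hdvd
  omega
end

section
/- None of the torus boards 6′×5′, 8′×5′, and 7′×6′ admits a fault-free domino tiling. -/
/-- Adjacency on the torus board `a′ × b′`: cells `(i,j)` and `(i+1,j)` with
addition in `ZMod a` (vertical neighbors, wrapping around) or `(i,j)` and
`(i,j+1)` with addition in `ZMod b` (horizontal neighbors, wrapping around). -/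
def torAdj (a b : ℕ) (c d : ZMod a × ZMod b) : Prop :=
  (c.2 = d.2 ∧ (d.1 = c.1 + 1 ∨ c.1 = d.1 + 1)) ∨
  (c.1 = d.1 ∧ (d.2 = c.2 + 1 ∨ c.2 = d.2 + 1))

/-- A tiling of the torus board: a set of dominoes (unordered pairs of adjacent
cells) such that every cell belongs to exactly one domino. -/
def torIsTiling (a b : ℕ) (T : Set (Sym2 (ZMod a × ZMod b))) : Prop :=
  (∀ p ∈ T, ∃ c d, torAdj a b c d ∧ p = s(c, d)) ∧
  (∀ x : ZMod a × ZMod b, ∃! p, p ∈ T ∧ x ∈ p)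

/-- A tiling of the torus board is fault-free if every horizontal fault-line
(between rows `i` and `i+1`, for `i : ZMod a`) and every vertical fault-line
(between columns `j` and `j+1`, for `j : ZMod b`) is crossed by some domino. -/
def torFaultFree (a b : ℕ) (T : Set (Sym2 (ZMod a × ZMod b))) : Prop :=
  (∀ i : ZMod a, ∃ j : ZMod b, s((i, j), (i + 1, j)) ∈ T) ∧
  (∀ j : ZMod b, ∃ i : ZMod a, s((i, j), (i, j + 1)) ∈ T)

/-- The torus board `a′ × b′` admits a fault-free domino tiling. -/
def torFaultFreeTileable (a b : ℕ) : Prop :=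
  ∃ T : Set (Sym2 (ZMod a × ZMod b)), torIsTiling a b T ∧ torFaultFree a b T

/-!
Let `c i` be the number of dominoes crossing the horizontal fault-line `i` and `d j` the number
crossing the vertical line `j`. Row `i + 1` is covered by the `c i + c (i + 1)` vertical dominoes
crossing lines `i` and `i + 1` and by horizontal dominoes, which cover its remaining cells in
pairs; hence `c i + c (i + 1) ≡ b [MOD 2]`, likewise `d j + d (j + 1) ≡ a [MOD 2]`, and summing
over the rows gives `2 * (∑ c + ∑ d) = a * b`.

Now let `a` be even and `b` odd. The sums `c i + c (i + 1)` are odd, hence at least `3`, and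
pairing consecutive rows gives `2 * ∑ c = 3 * a + 4 * s`. Then `∑ d` is even; since the `d j`
all have the same parity on the odd cycle `ZMod b`, they are all even and `∑ d ≥ 2 * b`.
Altogether `a * b ≥ 3 * a + 4 * b`, which fails for `6′ × 5′`, `8′ × 5′` and, after
transposing, for `7′ × 6′`.
-/

open Finset

theorem torAdj_symm {a b : ℕ} {x y : ZMod a × ZMod b} (h : torAdj a b x y) : torAdj a b y x := by
  rcases h with ⟨h1, h2⟩ | ⟨h1, h2⟩
  exacts [Or.inl ⟨h1.symm, h2.symm⟩, Or.inr ⟨h1.symm, h2.symm⟩]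

theorem torAdj_swap {a b : ℕ} {x y : ZMod a × ZMod b} (h : torAdj a b x y) :
    torAdj b a x.swap y.swap :=
  h.symm

def torSteps (a b : ℕ) : Finset (ZMod a × ZMod b) := {(1, 0), -(1, 0), (0, 1), -(0, 1)}

theorem torAdj_iff_sub_mem_torSteps {a b : ℕ} {x y : ZMod a × ZMod b} :
    torAdj a b x y ↔ y - x ∈ torSteps a b := by
  simp only [torAdj, torSteps, mem_insert, mem_singleton, Prod.ext_iff, Prod.fst_sub,
    Prod.snd_sub, Prod.fst_neg, Prod.snd_neg, neg_zero, sub_eq_zero]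
  grind

theorem sum_torSteps {a b : ℕ} (ha : 2 < a) (hb : 2 < b) {M : Type*} [AddCommMonoid M]
    (f : ZMod a × ZMod b → M) :
    ∑ v ∈ torSteps a b, f v = f (1, 0) + f (-(1, 0)) + f (0, 1) + f (-(0, 1)) := by
  have : Fact (2 < a) := ⟨ha⟩
  have : Fact (2 < b) := ⟨hb⟩
  have : Fact (1 < a) := ⟨by omega⟩
  have : Fact (1 < b) := ⟨by omega⟩
  rw [torSteps, sum_insert, sum_insert, sum_insert, sum_singleton]
  · simp [add_assoc]
  all_goals simp [Prod.ext_iff, ZMod.neg_one_ne_one.symm]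

theorem ZMod.sum_eq_sum_range {n : ℕ} [NeZero n] {M : Type*} [AddCommMonoid M]
    (f : ZMod n → M) : ∑ i, f i = ∑ l ∈ range n, f l :=
  sum_nbij' ZMod.val (↑) (fun i _ => mem_range.2 (ZMod.val_lt i)) (fun _ _ => mem_univ _)
    (fun i _ => ZMod.natCast_zmod_val i) (fun _ hl => ZMod.val_natCast_of_lt (mem_range.1 hl))
    (fun i _ => by rw [ZMod.natCast_zmod_val])

theorem exists_sum_range_two_mul_eq {y : ℕ → ℕ} (hpos : ∀ l, 0 < y l)
    (hodd : ∀ l, Odd (y l + y (l + 1))) (k : ℕ) :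
    ∃ s, ∑ l ∈ range (2 * k), y l = 3 * k + 2 * s := by
  induction k with
  | zero => exact ⟨0, rfl⟩
  | succ k ih =>
    obtain ⟨s, hs⟩ := ih
    obtain ⟨t, ht⟩ := hodd (2 * k)
    have := hpos (2 * k)
    have := hpos (2 * k + 1)
    refine ⟨s + t - 1, ?_⟩
    rw [mul_add, mul_one, sum_range_succ, sum_range_succ, hs]
    omega

theorem exists_two_mul_sum_eq_of_odd_add {n : ℕ} [NeZero n] (hn : Even n) {x : ZMod n → ℕ}
    (hpos : ∀ i, 0 < x i) (hodd : ∀ i, Odd (x i + x (i + 1))) :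
    ∃ s, 2 * ∑ i, x i = 3 * n + 4 * s := by
  obtain ⟨k, rfl⟩ := hn
  obtain ⟨s, hs⟩ := exists_sum_range_two_mul_eq (y := fun l => x l) (fun l => hpos l)
    (fun l => by simpa using hodd l) k
  refine ⟨s, ?_⟩
  rw [ZMod.sum_eq_sum_range, show range (k + k) = range (2 * k) by rw [two_mul], hs]
  ring

theorem two_mul_le_sum_of_even_add {n : ℕ} [NeZero n] (hn : Odd n) {x : ZMod n → ℕ}
    (hpos : ∀ i, 0 < x i) (heven : ∀ i, Even (x i + x (i + 1))) (hsum : Even (∑ i, x i)) :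
    2 * n ≤ ∑ i, x i := by
  have hpar : ∀ i, Even (x i) ↔ Even (x 0) := by
    have hcast : ∀ l : ℕ, Even (x l) ↔ Even (x 0) := by
      intro l
      induction l with
      | zero => simp
      | succ l ih => rw [Nat.cast_succ, ← ih]; exact (Nat.even_add.mp (heven l)).symm
    intro i
    obtain ⟨l, rfl⟩ := ZMod.natCast_zmod_surjective i
    exact hcast l
  by_cases h0 : Even (x 0)
  · calc 2 * n = ∑ _i : ZMod n, 2 := by simp [mul_comm]
      _ ≤ ∑ i, x i := sum_le_sum fun i _ => by
          obtain ⟨m, hm⟩ := (hpar i).2 h0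
          have := hpos i
          omega
  · rw [even_sum_iff_even_card_odd, filter_true_of_mem fun i _ => ?_, card_univ, ZMod.card]
      at hsum
    · exact absurd hsum (Nat.not_even_iff_odd.mpr hn)
    · exact Nat.not_even_iff_odd.mp (mt (hpar i).1 h0)

structure TorMatching (a b : ℕ) where
  partner : ZMod a × ZMod b → ZMod a × ZMod b
  adj : ∀ x, torAdj a b x (partner x)
  involutive : Function.Involutive partner

namespace TorMatching

variable {a b : ℕ} (M : TorMatching a b)

def transpose : TorMatching b a where
  partner x := (M.partner x.swap).swap
  adj x := torAdj_swap (M.adj x.swap)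
  involutive x := by simp [M.involutive x.swap]

section Counting

variable [NeZero b]

def rowCount (v : ZMod a × ZMod b) (r : ZMod a) : ℕ :=
  #{j | M.partner (r, j) = (r, j) + v}

theorem sum_torSteps_rowCount (r : ZMod a) :
    ∑ v ∈ torSteps a b, M.rowCount v r = b := by
  have hmaps : ∀ j ∈ (univ : Finset (ZMod b)), M.partner (r, j) - (r, j) ∈ torSteps a b :=
    fun j _ => torAdj_iff_sub_mem_torSteps.mp (M.adj (r, j))
  calc ∑ v ∈ torSteps a b, M.rowCount v r = #(univ : Finset (ZMod b)) := by
        simp only [card_eq_sum_card_fiberwise hmaps, rowCount, sub_eq_iff_eq_add']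
    _ = b := by rw [card_univ, ZMod.card]

theorem rowCount_neg (v : ZMod a × ZMod b) (r : ZMod a) :
    M.rowCount (-v) r = M.rowCount v (r - v.1) := by
  simp only [rowCount, card_filter]
  refine Fintype.sum_equiv (Equiv.subRight v.2) _ _ fun j => ?_
  have hx : ((r - v.1, j - v.2) : ZMod a × ZMod b) = (r, j) - v := rfl
  rw [Equiv.subRight_apply, hx, sub_add_cancel, ← sub_eq_add_neg]
  exact if_congr (M.involutive.eq_iff.trans eq_comm) rfl rfl

theorem rowCount_add_rowCount_add_two_mul (ha : 2 < a) (hb : 2 < b) (i : ZMod a) :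
    M.rowCount (1, 0) i + M.rowCount (1, 0) (i + 1) + 2 * M.rowCount (0, 1) (i + 1) = b := by
  have h := M.sum_torSteps_rowCount (i + 1)
  rw [sum_torSteps ha hb, rowCount_neg, rowCount_neg] at h
  simp only [add_sub_cancel_right, sub_zero] at h
  omega

theorem sum_rowCount_transpose [NeZero a] :
    ∑ j, M.transpose.rowCount (1, 0) j = ∑ r, M.rowCount (0, 1) r := by
  simp only [rowCount, card_filter]
  rw [sum_comm]
  refine sum_congr rfl fun r _ => sum_congr rfl fun j _ => ?_
  simp [transpose, Prod.ext_iff, and_comm]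

theorem two_mul_sum_rowCount_add_sum_transpose [NeZero a] (ha : 2 < a) (hb : 2 < b) :
    2 * (∑ i, M.rowCount (1, 0) i + ∑ j, M.transpose.rowCount (1, 0) j) = a * b := by
  have h := sum_congr rfl fun i (_ : i ∈ univ) => M.rowCount_add_rowCount_add_two_mul ha hb i
  simp only [sum_add_distrib, ← mul_sum, sum_const, card_univ, ZMod.card, smul_eq_mul] at h
  have hshift (f : ZMod a → ℕ) : ∑ i, f (i + 1) = ∑ i, f i :=
    Equiv.sum_comp (Equiv.addRight 1) f
  rw [hshift, hshift] at h
  rw [sum_rowCount_transpose]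
  linarith

variable [NeZero a]

/-- `M.rowCount (1, 0) i` counts the dominoes crossing the horizontal fault-line `i`, and
`M.transpose.rowCount (1, 0) j` those crossing the vertical fault-line `j`. -/
def FaultFree : Prop :=
  (∀ i, 0 < M.rowCount (1, 0) i) ∧ ∀ j, 0 < M.transpose.rowCount (1, 0) j

theorem FaultFree.transpose {M : TorMatching a b} (h : M.FaultFree) : M.transpose.FaultFree :=
  ⟨h.2, h.1⟩

theorem not_faultFree_of_even_of_odd (ha : 2 < a) (hb : 2 < b) (hae : Even a) (hbo : Odd b)
    (hab : a * b < 3 * a + 4 * b) : ¬ M.FaultFree := by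
  rintro ⟨hrow, hcol⟩
  obtain ⟨s, hs⟩ := exists_two_mul_sum_eq_of_odd_add hae hrow fun i => by
    obtain ⟨m, hm⟩ := hbo
    have := M.rowCount_add_rowCount_add_two_mul ha hb i
    exact ⟨m - M.rowCount (0, 1) (i + 1), by omega⟩
  have hcol_even : ∀ j, Even (M.transpose.rowCount (1, 0) j +
      M.transpose.rowCount (1, 0) (j + 1)) := fun j => by
    obtain ⟨k, hk⟩ := hae
    have := M.transpose.rowCount_add_rowCount_add_two_mul hb ha j
    exact ⟨k - M.transpose.rowCount (0, 1) (j + 1), by omega⟩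
  have htotal := M.two_mul_sum_rowCount_add_sum_transpose ha hb
  -- `2 * ∑ d = a * b - 3 * a - 4 * s` is divisible by `4`, as `a` is even and `b` odd
  have hsum_even : Even (∑ j, M.transpose.rowCount (1, 0) j) := by
    obtain ⟨k, rfl⟩ := hae
    obtain ⟨m, rfl⟩ := hbo
    have : (k + k) * (2 * m + 1) = 4 * (k * m) + 2 * k := by ring
    exact ⟨k * m - k - s, by omega⟩
  have := two_mul_le_sum_of_even_add hbo hcol hcol_even hsum_even
  nlinarith

end Counting

end TorMatching

theorem torIsTiling.exists_torMatching {a b : ℕ} {T : Set (Sym2 (ZMod a × ZMod b))}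
    (hT : torIsTiling a b T) :
    ∃ M : TorMatching a b, ∀ x y, s(x, y) ∈ T ↔ M.partner x = y := by
  have hpartner : ∀ x, ∃! y, s(x, y) ∈ T := fun x => by
    obtain ⟨p, ⟨hpT, hxp⟩, hp⟩ := hT.2 x
    obtain ⟨y, rfl⟩ := Sym2.mem_iff_exists.mp hxp
    exact ⟨y, hpT, fun z hz => Sym2.congr_right.mp (hp _ ⟨hz, Sym2.mem_mk_left x z⟩)⟩
  choose f hf huniq using hpartner
  have hmem : ∀ x y, s(x, y) ∈ T ↔ f x = y :=
    fun x y => ⟨fun h => (huniq x y h).symm, fun h => h ▸ hf x⟩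
  refine ⟨⟨f, fun x => ?_, fun x => (hmem _ _).mp (Sym2.eq_swap ▸ hf x)⟩, hmem⟩
  obtain ⟨c, d, hcd, hp⟩ := hT.1 _ (hf x)
  rcases Sym2.eq_iff.mp hp with ⟨rfl, rfl⟩ | ⟨rfl, rfl⟩
  exacts [hcd, torAdj_symm hcd]

theorem torFaultFreeTileable.exists_faultFree {a b : ℕ} [NeZero a] [NeZero b]
    (h : torFaultFreeTileable a b) : ∃ M : TorMatching a b, M.FaultFree := by
  obtain ⟨T, hT, hrow, hcol⟩ := h
  obtain ⟨M, hM⟩ := hT.exists_torMatching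
  refine ⟨M, fun i => ?_, fun j => ?_⟩
  · obtain ⟨j, hj⟩ := hrow i
    exact card_pos.mpr ⟨j, mem_filter.mpr ⟨mem_univ _, by simpa using (hM _ _).mp hj⟩⟩
  · obtain ⟨i, hi⟩ := hcol j
    exact card_pos.mpr ⟨i, mem_filter.mpr ⟨mem_univ _,
      by simp [TorMatching.transpose, (hM _ _).mp hi]⟩⟩

theorem not_torFaultFreeTileable_of_even_of_odd {a b : ℕ} (ha : 2 < a) (hb : 2 < b)
    (hae : Even a) (hbo : Odd b) (hab : a * b < 3 * a + 4 * b) : ¬ torFaultFreeTileable a b := by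
  have : NeZero a := ⟨by omega⟩
  have : NeZero b := ⟨by omega⟩
  intro h
  obtain ⟨M, hM⟩ := h.exists_faultFree
  exact M.not_faultFree_of_even_of_odd ha hb hae hbo hab hM

theorem not_torFaultFreeTileable_of_odd_of_even {a b : ℕ} (ha : 2 < a) (hb : 2 < b)
    (hao : Odd a) (hbe : Even b) (hab : a * b < 4 * a + 3 * b) : ¬ torFaultFreeTileable a b := by
  have : NeZero a := ⟨by omega⟩
  have : NeZero b := ⟨by omega⟩
  intro h
  obtain ⟨M, hM⟩ := h.exists_faultFree
  exact M.transpose.not_faultFree_of_even_of_odd hb ha hbe hao (by linarith [mul_comm a b])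
    hM.transpose

/-- None of the torus boards `6′ × 5′`, `8′ × 5′`, and `7′ × 6′` admits a
fault-free domino tiling. -/
theorem tor_not_faultFree_small :
    ¬ torFaultFreeTileable 6 5 ∧ ¬ torFaultFreeTileable 8 5 ∧
      ¬ torFaultFreeTileable 7 6 :=
  ⟨not_torFaultFreeTileable_of_even_of_odd (by norm_num) (by norm_num) (by decide) (by decide)
      (by norm_num),
    not_torFaultFreeTileable_of_even_of_odd (by norm_num) (by norm_num) (by decide) (by decide)
      (by norm_num),
    not_torFaultFreeTileable_of_odd_of_even (by norm_num) (by norm_num) (by decide) (by decide)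
      (by norm_num)⟩
end
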